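/- arXiv:2401.13316 — 3 statements merged into one kernel-verified Lean document; each statement's English description precedes it below -/
import Mathlib

section
/- Let E be a real inner product space, let g_1, …, g_l : E → ℝ be convex functions that are differentiable at a point x̄, let S = {x ∈ E : g_i(x) ≤ 0 for all i = 1, …, l}, and assume x̄ ∈ S. Then the tangent cone is contained in the linearization cone: for every y ∈ T_S(x̄) and every index i with g_i(x̄) = 0, one has g_i′(x̄)(y) ≤ 0; that is, T_S(x̄) ⊆ C_S(x̄) := {y ∈ E : g_i′(x̄)(y) ≤ 0 for all i with g_i(x̄) = 0}. -/
/-!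
On the ray `s ↦ x̄ + s • y`, an active convex constraint `gᵢ` starts at `0` and is still `≤ 0`
at the feasible point `x̄ + t • y`, so its secant slope over `[0, t]` is `≤ 0`; by convexity the
derivative `gᵢ'(x̄) y` of the restriction at `0` lies below every such slope.
-/

open Set

/-- The tangent cone of `S` at `p`:
`{v : ∃ t > 0, p + t • v ∈ interior S} ∪ {0}`. -/
def tangentCone' {E : Type*} [NormedAddCommGroup E] [InnerProductSpace ℝ E]
    (S : Set E) (p : E) : Set E :=
  {v | ∃ t : ℝ, 0 < t ∧ p + t • v ∈ interior S} ∪ {0}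

theorem ConvexOn.le_slope_of_hasFDerivAt {E : Type*} [NormedAddCommGroup E] [NormedSpace ℝ E]
    {f : E → ℝ} {f' : E →L[ℝ] ℝ} {x v : E} {t : ℝ} (hf : ConvexOn ℝ univ f)
    (hd : HasFDerivAt f f' x) (ht : 0 < t) :
    f' v ≤ slope (fun s : ℝ => f (x + s • v)) 0 t := by
  set γ : ℝ →ᵃ[ℝ] E := AffineMap.lineMap x (x + v)
  have hγ : (fun s : ℝ => x + s • v) = γ := funext fun s => by
    simp [γ, AffineMap.lineMap_apply, add_comm]
  have hderiv : HasDerivAt (f ∘ γ) (f' v) 0 := by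
    have hd₀ : HasFDerivAt f f' (γ 0) := by simpa [γ] using hd
    simpa using hd₀.comp_hasDerivAt (0 : ℝ) AffineMap.hasDerivAt_lineMap
  have key := (hf.comp_affineMap γ).le_slope_of_hasDerivAt (mem_univ 0) (mem_univ t) ht hderiv
  rw [← hγ] at key
  exact key

theorem tangentCone_subset_linearizationCone_general
    {E : Type*} [NormedAddCommGroup E] [InnerProductSpace ℝ E]
    (l : ℕ) (g : Fin l → E → ℝ) (g' : Fin l → E →L[ℝ] ℝ) (xb : E)
    (hconv : ∀ i, ConvexOn ℝ Set.univ (g i))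
    (hdiff : ∀ i, HasFDerivAt (g i) (g' i) xb)
    (S : Set E) (hS : S = {x : E | ∀ i, g i x ≤ 0}) :
    tangentCone' S xb ⊆ {y : E | ∀ i, g i xb = 0 → g' i y ≤ 0} := by
  rintro y (⟨t, ht, hmem⟩ | rfl) i hactive
  · have hfeasible : g i (xb + t • y) ≤ 0 := by
      subst hS
      exact interior_subset hmem i
    calc g' i y ≤ slope (fun s : ℝ => g i (xb + s • y)) 0 t :=
          (hconv i).le_slope_of_hasFDerivAt (hdiff i) ht
      _ = g i (xb + t • y) / t := by simp [slope_def_field, hactive]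
      _ ≤ 0 := div_nonpos_of_nonpos_of_nonneg hfeasible ht.le
  · simp

/-- For a feasible set `S = {x : gᵢ(x) ≤ 0, i = 1,…,l}` defined by convex
functions differentiable at `xb ∈ S`, the tangent cone at `xb` is contained in
the linearization cone `C_S(xb) = {y : gᵢ'(xb)(y) ≤ 0 for all active i}`. -/
theorem tangentCone_subset_linearizationCone
    {E : Type*} [NormedAddCommGroup E] [InnerProductSpace ℝ E]
    (l : ℕ) (g : Fin l → E → ℝ) (g' : Fin l → E →L[ℝ] ℝ) (xb : E)
    (hconv : ∀ i, ConvexOn ℝ Set.univ (g i))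
    (hdiff : ∀ i, HasFDerivAt (g i) (g' i) xb)
    (S : Set E) (hS : S = {x : E | ∀ i, g i x ≤ 0}) (hxb : xb ∈ S) :
    tangentCone' S xb ⊆ {y : E | ∀ i, g i xb = 0 → g' i y ≤ 0} :=
  tangentCone_subset_linearizationCone_general l g g' xb hconv hdiff S hS
end

section
/- (Fritz John conditions) Let E be a finite-dimensional real inner product space, let f : E → ℝ and g_1, …, g_l : E → ℝ be differentiable functions with each g_i convex, let S = {x ∈ E : g_i(x) ≤ 0 for all i = 1, …, l}, and let x̄ ∈ S be a local minimizer of f on S (i.e. there is a neighborhood U of x̄ with f(x̄) ≤ f(x) for all x ∈ S ∩ U). Then there exist real numbers λ_0, λ_1, …, λ_l, not all zero, such that λ_0·grad f(x̄) + ∑_{i=1}^l λ_i·grad g_i(x̄) = 0, λ_i ≥ 0 for all i = 0, 1, …, l, and λ_i·g_i(x̄) = 0 for all i = 1, …, l. -/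
/-!
If some direction `d` had `⟪grad f(x̄), d⟫ < 0` and `⟪grad gᵢ(x̄), d⟫ < 0` for every active
constraint, then `x̄ + t d` would stay feasible for small `t > 0` (inactive constraints by
continuity) and `d` would be a feasible descent direction, contradicting minimality. So no such
`d` exists, and Gordan's alternative (separating `0` from the convex hull of the active gradients)
yields a convex combination of them that vanishes; its weights are the multipliers, zero on the
inactive constraints.
-/

open Filter Topology Set

open scoped InnerProductSpace

lemma eventually_lt_of_hasDerivAt_of_neg {φ : ℝ → ℝ} {L : ℝ} (hφ : HasDerivAt φ L 0)
    (hL : L < 0) : ∀ᶠ t in 𝓝[>] (0 : ℝ), φ t < φ 0 := by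
  have hslope : Tendsto (slope φ 0) (𝓝[>] 0) (𝓝 L) :=
    (hasDerivAt_iff_tendsto_slope.mp hφ).mono_left (nhdsWithin_mono _ fun _ ht => ne_of_gt ht)
  filter_upwards [hslope.eventually_lt_const hL, self_mem_nhdsWithin] with t ht (ht0 : 0 < t)
  rw [slope_def_field, sub_zero, div_neg_iff] at ht
  rcases ht with ⟨-, htneg⟩ | ⟨hdrop, -⟩ <;> linarith

section

variable {E : Type*} [NormedAddCommGroup E] [InnerProductSpace ℝ E] [CompleteSpace E]

lemma HasGradientAt.hasDerivAt_comp_add_smul {h : E → ℝ} {v x : E} (hh : HasGradientAt h v x)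
    (d : E) : HasDerivAt (fun t : ℝ => h (x + t • d)) ⟪v, d⟫_ℝ 0 := by
  have hline : HasDerivAt (fun t : ℝ => x + t • d) d 0 := by
    simpa using ((hasDerivAt_id (0 : ℝ)).smul_const d).const_add x
  have hh' : HasFDerivAt h (InnerProductSpace.toDual ℝ E v) (x + (0 : ℝ) • d) := by
    simpa using hh.hasFDerivAt
  have hcomp := hh'.comp_hasDerivAt (0 : ℝ) hline
  rwa [InnerProductSpace.toDual_apply_apply] at hcomp

lemma HasGradientAt.eventually_nonpos_add_smul {h : E → ℝ} {v x d : E}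
    (hh : HasGradientAt h v x) (hx : h x ≤ 0) (hd : h x = 0 → ⟪v, d⟫_ℝ < 0) :
    ∀ᶠ t in 𝓝[>] (0 : ℝ), h (x + t • d) ≤ 0 := by
  have hderiv := hh.hasDerivAt_comp_add_smul d
  rcases hx.eq_or_lt with hx0 | hxneg
  · filter_upwards [eventually_lt_of_hasDerivAt_of_neg hderiv (hd hx0)] with t ht
    simpa [hx0] using ht.le
  · have hcont : Tendsto (fun t : ℝ => h (x + t • d)) (𝓝 0) (𝓝 (h x)) := by
      simpa using hderiv.continuousAt.tendsto
    exact ((hcont.eventually_lt_const hxneg).filter_mono nhdsWithin_le_nhds).mono fun _ => le_of_lt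

lemma IsLocalMinOn.inner_gradient_nonneg {f : E → ℝ} {v x d : E} {s : Set E}
    (hmin : IsLocalMinOn f s x) (hf : HasGradientAt f v x)
    (hd : ∀ᶠ t in 𝓝[>] (0 : ℝ), x + t • d ∈ s) : 0 ≤ ⟪v, d⟫_ℝ := by
  simpa using hmin.hasFDerivWithinAt_nonneg hf.hasFDerivAt.hasFDerivWithinAt
    (mem_posTangentConeAt_of_frequently_mem hd.frequently)

theorem exists_mem_stdSimplex_sum_smul_eq_zero {ι : Type*} [Fintype ι] (c : ι → E) (T : Set ι)
    (h : ∀ d : E, ∃ k ∈ T, 0 ≤ ⟪c k, d⟫_ℝ) :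
    ∃ w ∈ stdSimplex ℝ ι, (∀ k ∉ T, w k = 0) ∧ ∑ k, w k • c k = 0 := by
  classical
  set W : Set (ι → ℝ) := stdSimplex ℝ ι ∩ Tᶜ.pi fun _ => {0}
  set A : (ι → ℝ) →ₗ[ℝ] E := Fintype.linearCombination ℝ c
  suffices h0 : (0 : E) ∈ A '' W by
    obtain ⟨w, ⟨hw, hwT⟩, hAw⟩ := h0
    exact ⟨w, hw, hwT, by simpa [A, Fintype.linearCombination_apply] using hAw⟩
  by_contra h0
  have hconv : Convex ℝ (A '' W) :=
    ((convex_stdSimplex ℝ ι).inter (convex_pi fun _ _ => convex_singleton 0)).linear_image A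
  have hclosed : IsClosed (A '' W) :=
    (((isCompact_stdSimplex ℝ ι).inter_right (isClosed_set_pi fun _ _ => isClosed_singleton)).image
      A.continuous_of_finiteDimensional).isClosed
  obtain ⟨φ, u, hφ0, hφW⟩ := geometric_hahn_banach_point_closed hconv hclosed h0
  obtain ⟨k, hkT, hk⟩ := h (-(InnerProductSpace.toDual ℝ E).symm φ)
  have hsingle : Pi.single k 1 ∈ W := ⟨single_mem_stdSimplex ℝ k, fun j hj =>
    Pi.single_eq_of_ne (by rintro rfl; exact hj hkT) 1⟩
  have hφk : u < φ (c k) := by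
    simpa [A, Fintype.linearCombination_apply, Pi.single_apply] using
      hφW _ (mem_image_of_mem A hsingle)
  rw [inner_neg_right, real_inner_comm, InnerProductSpace.toDual_symm_apply] at hk
  simp only [map_zero] at hφ0
  linarith

end

theorem fritz_john_conditions_general
    {E : Type*} [NormedAddCommGroup E] [InnerProductSpace ℝ E]
    [FiniteDimensional ℝ E]
    (l : ℕ) (f : E → ℝ) (g : Fin l → E → ℝ)
    (gradf : E) (gradg : Fin l → E) (xb : E)
    (hf : HasGradientAt f gradf xb)
    (hg : ∀ i, HasGradientAt (g i) (gradg i) xb)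
    (S : Set E) (hS : S = {x : E | ∀ i, g i x ≤ 0}) (hxb : xb ∈ S)
    (hmin : ∃ U ∈ 𝓝 xb, ∀ x ∈ S ∩ U, f xb ≤ f x) :
    ∃ (lam0 : ℝ) (lam : Fin l → ℝ),
      ¬(lam0 = 0 ∧ ∀ i, lam i = 0) ∧
      lam0 • gradf + ∑ i, lam i • gradg i = 0 ∧
      0 ≤ lam0 ∧ (∀ i, 0 ≤ lam i) ∧
      ∀ i, lam i * g i xb = 0 := by
  subst hS
  obtain ⟨U, hU, hUmin⟩ := hmin
  have hlocmin : IsLocalMinOn f {x | ∀ i, g i x ≤ 0} xb :=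
    mem_of_superset (inter_mem_nhdsWithin _ hU) hUmin
  set c : Fin (l + 1) → E := Fin.cons gradf gradg
  set T : Set (Fin (l + 1)) := {k | (Fin.cons True fun i => g i xb = 0 : Fin (l + 1) → Prop) k}
  have hno_descent : ∀ d : E, ∃ k ∈ T, 0 ≤ ⟪c k, d⟫_ℝ := by
    intro d
    by_contra! hdescent
    have hfeasible : ∀ᶠ t in 𝓝[>] (0 : ℝ), xb + t • d ∈ {x | ∀ i, g i x ≤ 0} :=
      eventually_all.2 fun i =>
        (hg i).eventually_nonpos_add_smul (hxb i) fun hi => hdescent i.succ (by simpa [T] using hi)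
    exact (hdescent 0 (by simp [T])).not_ge (hlocmin.inner_gradient_nonneg hf hfeasible)
  obtain ⟨w, hw, hwT, hsum⟩ := exists_mem_stdSimplex_sum_smul_eq_zero c T hno_descent
  refine ⟨w 0, fun i => w i.succ, ?_, by simpa [c, Fin.sum_univ_succ] using hsum, hw.1 0,
    fun i => hw.1 i.succ, fun i => ?_⟩
  · rintro ⟨h0, hsucc⟩
    simpa [Fin.sum_univ_succ, h0, hsucc] using hw.2
  · by_cases hi : g i xb = 0
    · exact mul_eq_zero_of_right _ hi
    · exact mul_eq_zero_of_left (hwT i.succ (by simpa [T] using hi)) _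

/-- Fritz John necessary optimality conditions: if `xb` is a local minimizer of
a differentiable `f` on `S = {x : gᵢ(x) ≤ 0, i = 1,…,l}` with the `gᵢ` convex
and differentiable, then there are multipliers `λ₀, λ₁, …, λ_l ≥ 0`, not all
zero, with `λ₀ grad f(xb) + ∑ᵢ λᵢ grad gᵢ(xb) = 0` and `λᵢ gᵢ(xb) = 0`. -/
theorem fritz_john_conditions
    {E : Type*} [NormedAddCommGroup E] [InnerProductSpace ℝ E]
    [FiniteDimensional ℝ E]
    (l : ℕ) (f : E → ℝ) (g : Fin l → E → ℝ)
    (gradf : E) (gradg : Fin l → E) (xb : E)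
    (hf : HasGradientAt f gradf xb)
    (hg : ∀ i, HasGradientAt (g i) (gradg i) xb)
    (hgconv : ∀ i, ConvexOn ℝ Set.univ (g i))
    (S : Set E) (hS : S = {x : E | ∀ i, g i x ≤ 0}) (hxb : xb ∈ S)
    (hmin : ∃ U ∈ 𝓝 xb, ∀ x ∈ S ∩ U, f xb ≤ f x) :
    ∃ (lam0 : ℝ) (lam : Fin l → ℝ),
      ¬(lam0 = 0 ∧ ∀ i, lam i = 0) ∧
      lam0 • gradf + ∑ i, lam i • gradg i = 0 ∧
      0 ≤ lam0 ∧ (∀ i, 0 ≤ lam i) ∧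
      ∀ i, lam i * g i xb = 0 :=
  fritz_john_conditions_general l f g gradf gradg xb hf hg S hS hxb hmin
end

section
/- (Karush–Kuhn–Tucker conditions) Let E be a finite-dimensional real inner product space, let f : E → ℝ and g_1, …, g_l : E → ℝ be differentiable functions with each g_i convex, let S = {x ∈ E : g_i(x) ≤ 0 for all i = 1, …, l}, and let x̄ ∈ S be a local minimizer of f on S (i.e. there is a neighborhood U of x̄ with f(x̄) ≤ f(x) for all x ∈ S ∩ U). Assume the constraint qualification C_S(x̄) ⊆ convexHull(T_S(x̄)), where C_S(x̄) := {y ∈ E : ⟨grad g_i(x̄), y⟩ ≤ 0 for all i with g_i(x̄) = 0} is the linearization cone. Then there exist real numbers λ_1, …, λ_l such that grad f(x̄) + ∑_{i=1}^l λ_i·grad g_i(x̄) = 0, λ_i ≥ 0 for all i = 1, …, l, and λ_i·g_i(x̄) = 0 for all i = 1, …, l. -/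
/-!
At a local minimizer `x̄` of `f` on `S`, which is convex as the `gᵢ` are, `⟪∇f(x̄), v⟫ ≥ 0` for
every direction `v` pointing from `x̄` into the interior of `S`, hence on the convex hull of the
tangent cone and, by the constraint qualification, on the linearization cone
`{y | ⟪∇gᵢ(x̄), y⟫ ≤ 0 for active i}`. By Farkas' lemma `∇f(x̄)` is then a nonnegative combination
of the `-∇gᵢ(x̄)` with `i` active; these coefficients, extended by zero to the inactive
constraints, are the multipliers.

Farkas' lemma needs the cone generated by finitely many vectors to be closed. By the conic
Carathéodory theorem it is the finite union of the cones over its linearly independent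
subfamilies, and each of those is the image of the closed orthant under an injective linear map.
-/

open Filter Topology

open scoped RealInnerProductSpace

namespace PointedCone

variable {ι E : Type*} [AddCommGroup E] [Module ℝ E] {v : ι → E} {s : Finset ι} {x : E}

theorem mem_hull_image_finset_iff :
    x ∈ hull ℝ (v '' s) ↔ ∃ μ : ι → ℝ, (∀ i ∈ s, 0 ≤ μ i) ∧ ∑ i ∈ s, μ i • v i = x := by
  rw [Submodule.mem_span_image_finset_iff_exists_fun']
  constructor
  · rintro ⟨c, rfl⟩
    exact ⟨fun i => c i, fun i _ => (c i).2, rfl⟩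
  · rintro ⟨μ, hμ, rfl⟩
    refine ⟨fun i => ⟨max (μ i) 0, le_max_right _ _⟩, Finset.sum_congr rfl fun i hi => ?_⟩
    rw [Nonneg.mk_smul, max_eq_left (hμ i hi)]

theorem exists_mem_hull_image_erase_of_not_linearIndepOn [DecidableEq ι]
    (hv : ¬LinearIndepOn ℝ v (s : Set ι)) (hx : x ∈ hull ℝ (v '' s)) :
    ∃ j ∈ s, x ∈ hull ℝ (v '' (s.erase j)) := by
  obtain ⟨μ, hμ, rfl⟩ := mem_hull_image_finset_iff.mp hx
  have hrel : ∃ c : ι → ℝ, ∑ i ∈ s, c i • v i = 0 ∧ ∃ i ∈ s, 0 < c i := by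
    simp only [linearIndepOn_finset_iff, not_forall] at hv
    obtain ⟨c, hc, i, hi, hci⟩ := hv
    rcases lt_or_gt_of_ne hci with hneg | hpos
    · exact ⟨-c, by simp [neg_smul, hc], i, hi, neg_pos.mpr hneg⟩
    · exact ⟨c, hc, i, hi, hpos⟩
  obtain ⟨c, hc, hpos⟩ := hrel
  -- Move along the relation `c` until the first coefficient of `μ` reaches zero.
  obtain ⟨j, hj, hmin⟩ := (s.filter (0 < c ·)).exists_min_image (fun i => μ i / c i)
    (by simpa [Finset.Nonempty] using hpos)
  rw [Finset.mem_filter] at hj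
  set r := μ j / c j
  have hr : 0 ≤ r := div_nonneg (hμ j hj.1) hj.2.le
  have hν : ∀ i ∈ s, 0 ≤ μ i - r * c i := by
    intro i hi
    rcases lt_or_ge 0 (c i) with hci | hci
    · have := (le_div_iff₀ hci).mp (hmin i (Finset.mem_filter.mpr ⟨hi, hci⟩))
      linarith
    · nlinarith [hμ i hi]
  have hνj : μ j - r * c j = 0 := by
    simp only [r, div_mul_cancel₀ _ hj.2.ne', sub_self]
  refine ⟨j, hj.1, mem_hull_image_finset_iff.mpr
    ⟨fun i => μ i - r * c i, fun i hi => hν i (Finset.mem_of_mem_erase hi), ?_⟩⟩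
  rw [Finset.sum_erase _ (by simp only [hνj, zero_smul])]
  simp only [sub_smul, mul_smul, Finset.sum_sub_distrib, ← Finset.smul_sum, hc, smul_zero,
    sub_zero]

theorem exists_linearIndepOn_of_mem_hull_image (hx : x ∈ hull ℝ (v '' s)) :
    ∃ t ⊆ s, LinearIndepOn ℝ v (t : Set ι) ∧ x ∈ hull ℝ (v '' t) := by
  classical
  induction s using Finset.strongInduction with
  | H s ih =>
    by_cases hv : LinearIndepOn ℝ v (s : Set ι)
    · exact ⟨s, subset_rfl, hv, hx⟩
    · obtain ⟨j, hj, hxj⟩ := exists_mem_hull_image_erase_of_not_linearIndepOn hv hx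
      obtain ⟨t, hts, ht, hxt⟩ := ih _ (Finset.erase_ssubset hj) hxj
      exact ⟨t, hts.trans (Finset.erase_subset j s), ht, hxt⟩

variable [TopologicalSpace E] [IsTopologicalAddGroup E] [ContinuousSMul ℝ E] [T2Space E]

theorem isClosed_hull_image_of_linearIndepOn (hv : LinearIndepOn ℝ v (s : Set ι)) :
    IsClosed (hull ℝ (v '' s) : Set E) := by
  have hinj := hv.linearIndependent.fintypeLinearCombination_injective
  have heq : (hull ℝ (v '' s) : Set E) =
      Fintype.linearCombination ℝ (fun i : s => v i) '' Set.Ici 0 := by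
    ext x
    rw [SetLike.mem_coe, Submodule.mem_span_image_finset_iff_exists_fun]
    constructor
    · rintro ⟨c, rfl⟩
      exact ⟨fun i => c i, fun i => (c i).2, by simp [Fintype.linearCombination_apply]⟩
    · rintro ⟨μ, hμ, rfl⟩
      exact ⟨fun i => ⟨μ i, hμ i⟩, by simp [Fintype.linearCombination_apply]⟩
  rw [heq]
  exact (LinearMap.isClosedEmbedding_of_injective (LinearMap.ker_eq_bot.mpr hinj)).isClosedMap _
    isClosed_Ici

theorem isClosed_hull_image_finset : IsClosed (hull ℝ (v '' s) : Set E) := by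
  classical
  have heq : (hull ℝ (v '' s) : Set E) =
      ⋃ (t : Finset ι) (_ : t ∈ s.powerset.filter fun t : Finset ι =>
        LinearIndepOn ℝ v (t : Set ι)), (hull ℝ (v '' t) : Set E) := by
    ext x
    simp only [Set.mem_iUnion, Finset.mem_filter, Finset.mem_powerset, SetLike.mem_coe,
      exists_prop]
    constructor
    · intro hx
      obtain ⟨t, hts, ht, hxt⟩ := exists_linearIndepOn_of_mem_hull_image hx
      exact ⟨t, ⟨hts, ht⟩, hxt⟩
    · rintro ⟨t, ⟨hts, -⟩, hxt⟩
      exact Submodule.span_mono (Set.image_mono (Finset.coe_subset.mpr hts)) hxt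
  rw [heq]
  exact isClosed_biUnion_finset fun t ht =>
    isClosed_hull_image_of_linearIndepOn (Finset.mem_filter.mp ht).2

theorem exists_nonneg_sum_smul_eq_of_forall_inner_nonneg {F : Type*} [NormedAddCommGroup F]
    [InnerProductSpace ℝ F] [FiniteDimensional ℝ F] (v : ι → F) (s : Finset ι) (c : F)
    (h : ∀ y, (∀ i ∈ s, 0 ≤ ⟪v i, y⟫) → 0 ≤ ⟪c, y⟫) :
    ∃ μ : ι → ℝ, (∀ i ∈ s, 0 ≤ μ i) ∧ ∑ i ∈ s, μ i • v i = c := by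
  have := FiniteDimensional.complete ℝ F
  rw [← mem_hull_image_finset_iff]
  by_contra hc
  obtain ⟨y, hy, hcy⟩ := ProperCone.hyperplane_separation'
    (⟨hull ℝ (v '' s), isClosed_hull_image_finset⟩ : ProperCone ℝ F) hc
  exact hcy.not_ge (h y fun i hi => hy _ (subset_hull (Set.mem_image_of_mem v hi)))

end PointedCone

theorem convex_setOf_forall_nonpos {ι E : Type*} [AddCommGroup E] [Module ℝ E]
    {g : ι → E → ℝ} (hg : ∀ i, ConvexOn ℝ Set.univ (g i)) :
    Convex ℝ {x | ∀ i, g i x ≤ 0} := by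
  simpa only [Set.ofPred_forall] using convex_iInter fun i => by simpa using (hg i).convex_le 0

section

variable {E : Type*} [NormedAddCommGroup E] [InnerProductSpace ℝ E] [CompleteSpace E]
variable {f : E → ℝ} {S : Set E} {xb gradf w : E}

theorem IsLocalMinOn.inner_gradient_nonneg_of_mem_tangentCone' (hmin : IsLocalMinOn f S xb)
    (hf : HasGradientAt f gradf xb) (hS : Convex ℝ S) (hxb : xb ∈ S)
    (hw : w ∈ tangentCone' S xb) : 0 ≤ ⟪gradf, w⟫ := by
  rcases hw with ⟨t, ht, hmem⟩ | rfl
  · have hseg : segment ℝ xb (xb + t • w) ⊆ S := hS.segment_subset hxb (interior_subset hmem)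
    have := hmin.hasFDerivWithinAt_nonneg hf.hasFDerivAt.hasFDerivWithinAt
      (mem_posTangentConeAt_of_segment_subset hseg)
    simp only [InnerProductSpace.toDual_apply_apply, real_inner_smul_right] at this
    exact nonneg_of_mul_nonneg_right this ht
  · simp

theorem IsLocalMinOn.inner_gradient_nonneg_of_mem_convexHull_tangentCone'
    (hmin : IsLocalMinOn f S xb) (hf : HasGradientAt f gradf xb) (hS : Convex ℝ S)
    (hxb : xb ∈ S) (hw : w ∈ convexHull ℝ (tangentCone' S xb)) : 0 ≤ ⟪gradf, w⟫ :=
  convexHull_min (fun _ hv => hmin.inner_gradient_nonneg_of_mem_tangentCone' hf hS hxb hv)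
    (convex_halfSpace_ge (innerₛₗ ℝ gradf).isLinear 0) hw

end

theorem kkt_conditions_general
    {E : Type*} [NormedAddCommGroup E] [InnerProductSpace ℝ E]
    [FiniteDimensional ℝ E]
    (l : ℕ) (f : E → ℝ) (g : Fin l → E → ℝ)
    (gradf : E) (gradg : Fin l → E) (xb : E)
    (hf : HasGradientAt f gradf xb)
    (hgconv : ∀ i, ConvexOn ℝ Set.univ (g i))
    (S : Set E) (hS : S = {x : E | ∀ i, g i x ≤ 0}) (hxb : xb ∈ S)
    (hmin : ∃ U ∈ 𝓝 xb, ∀ x ∈ S ∩ U, f xb ≤ f x)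
    (hCQ : {y : E | ∀ i, g i xb = 0 → inner ℝ (gradg i) y ≤ (0 : ℝ)} ⊆
      convexHull ℝ (tangentCone' S xb)) :
    ∃ lam : Fin l → ℝ,
      gradf + ∑ i, lam i • gradg i = 0 ∧
      (∀ i, 0 ≤ lam i) ∧
      ∀ i, lam i * g i xb = 0 := by
  classical
  obtain ⟨U, hU, hUmin⟩ := hmin
  have hlocal : IsLocalMinOn f S xb := mem_of_superset (inter_mem_nhdsWithin S hU) hUmin
  have hSconv : Convex ℝ S := hS ▸ convex_setOf_forall_nonpos hgconv
  set A := Finset.univ.filter fun i => g i xb = 0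
  obtain ⟨μ, hμ, hsum⟩ := PointedCone.exists_nonneg_sum_smul_eq_of_forall_inner_nonneg
    (fun i => -gradg i) A gradf fun y hy =>
      hlocal.inner_gradient_nonneg_of_mem_convexHull_tangentCone' hf hSconv hxb
        (hCQ fun i hi => by simpa using hy i (by simp [A, hi]))
  refine ⟨fun i => if g i xb = 0 then μ i else 0, ?_, fun i => ?_, fun i => ?_⟩
  · simp [← hsum, A, Finset.sum_filter, ite_smul]
  · dsimp only
    split_ifs with h
    exacts [hμ i (by simp [A, h]), le_rfl]
  · dsimp only
    split_ifs with h <;> simp [h]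

/-- Karush–Kuhn–Tucker necessary optimality conditions: if `xb` is a local
minimizer of a differentiable `f` on `S = {x : gᵢ(x) ≤ 0, i = 1,…,l}` with the
`gᵢ` convex and differentiable, and the constraint qualification
`C_S(xb) ⊆ convexHull (T_S(xb))` holds, then there are multipliers
`λ₁, …, λ_l ≥ 0` with `grad f(xb) + ∑ᵢ λᵢ grad gᵢ(xb) = 0` and
`λᵢ gᵢ(xb) = 0`. -/
theorem kkt_conditions
    {E : Type*} [NormedAddCommGroup E] [InnerProductSpace ℝ E]
    [FiniteDimensional ℝ E]
    (l : ℕ) (f : E → ℝ) (g : Fin l → E → ℝ)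
    (gradf : E) (gradg : Fin l → E) (xb : E)
    (hf : HasGradientAt f gradf xb)
    (hg : ∀ i, HasGradientAt (g i) (gradg i) xb)
    (hgconv : ∀ i, ConvexOn ℝ Set.univ (g i))
    (S : Set E) (hS : S = {x : E | ∀ i, g i x ≤ 0}) (hxb : xb ∈ S)
    (hmin : ∃ U ∈ 𝓝 xb, ∀ x ∈ S ∩ U, f xb ≤ f x)
    (hCQ : {y : E | ∀ i, g i xb = 0 → inner ℝ (gradg i) y ≤ (0 : ℝ)} ⊆
      convexHull ℝ (tangentCone' S xb)) :
    ∃ lam : Fin l → ℝ,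
      gradf + ∑ i, lam i • gradg i = 0 ∧
      (∀ i, 0 ≤ lam i) ∧
      ∀ i, lam i * g i xb = 0 :=
  kkt_conditions_general l f g gradf gradg xb hf hgconv S hS hxb hmin hCQ
end
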